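/- arXiv:1903.10875 — 2 statements merged into one kernel-verified Lean document; each statement's English description precedes it below -/
import Mathlib

section
/- Let A be an L×N complex matrix all of whose columns have unit ℓ² norm, and let H be an N×P complex matrix with nonzero columns such that all columns of the product AH are nonzero and Nμ(A) ≠ 1. Then the mutual coherence of AH satisfies μ(AH) ≤ ( μ(H) + N μ(A) ) / | 1 − N μ(A) |. -/
open Matrix Finset Filter

noncomputable section

/-- A vector is `s`-sparse if it has at most `s` nonzero entries. -/
def sparse {n : Type*} (s : ℕ) (x : n → ℂ) : Prop := {i | x i ≠ 0}.ncard ≤ s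

/-- The ℓ² norm of the `j`-th column of a matrix. -/
def colNorm {m n : Type*} [Fintype m] (A : Matrix m n ℂ) (j : n) : ℝ :=
  Real.sqrt (∑ i, ‖A i j‖ ^ 2)

/-- The mutual coherence of a matrix:
`μ(A) = max_{j ≠ k} |⟨A_j, A_k⟩| / (‖A_j‖₂ ‖A_k‖₂)`. -/
def coherence {m n : Type*} [Fintype m] [Fintype n] (A : Matrix m n ℂ) : ℝ :=
  sSup {r : ℝ | ∃ j k, j ≠ k ∧ r = ‖(Aᴴ * A) j k‖ / (colNorm A j * colNorm A k)}

/-- The ℓ¹ norm of a vector. -/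
def l1 {n : Type*} [Fintype n] (x : n → ℂ) : ℝ := ∑ i, ‖x i‖

/-- The ℓ^∞ norm of a vector. -/
def linf {n : Type*} [Fintype n] (x : n → ℂ) : ℝ := ⨆ i, ‖x i‖

/-- The squared ℓ² norm of a vector. -/
def l2sq {n : Type*} [Fintype n] (x : n → ℂ) : ℝ := ∑ i, ‖x i‖ ^ 2

/-- The entrywise max norm of a matrix, `‖M‖_max = max_{i,j} |M_{ij}|`. -/
def maxNorm {m n : Type*} [Fintype m] [Fintype n] (A : Matrix m n ℂ) : ℝ :=
  ⨆ p : m × n, ‖A p.1 p.2‖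

/-- The induced ℓ¹ matrix norm (maximum absolute column sum). -/
def matL1 {m n : Type*} [Fintype m] [Fintype n] (A : Matrix m n ℂ) : ℝ :=
  ⨆ j, ∑ i, ‖A i j‖

/-- `x` is a hard thresholding `H_s(z)` of `z`: it agrees with `z` on an
index set `I` of size `s` consisting of entries of largest modulus, and
vanishes outside `I`. -/
def IsHardThreshold {n : Type*} [Fintype n] (s : ℕ) (z x : n → ℂ) : Prop :=
  ∃ I : Finset n, I.card = s ∧ (∀ i ∈ I, ∀ j ∉ I, ‖z j‖ ≤ ‖z i‖) ∧
    (∀ i ∈ I, x i = z i) ∧ (∀ i ∉ I, x i = 0)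

/-- `A` satisfies the restricted isometry property of order `t` with constant `δ`. -/
def SatisfiesRIP {m n : Type*} [Fintype m] [Fintype n] (A : Matrix m n ℂ) (t : ℕ) (δ : ℝ) :
    Prop :=
  0 < δ ∧ δ < 1 ∧ ∀ z : n → ℂ, sparse t z →
    (1 - δ) * l2sq z ≤ l2sq (A.mulVec z) ∧ l2sq (A.mulVec z) ≤ (1 + δ) * l2sq z

/-- The spectral (operator ℓ²) norm of a square matrix. -/
def specNorm {n : Type*} [Fintype n] [DecidableEq n] (M : Matrix n n ℂ) : ℝ :=
  ‖Matrix.toEuclideanCLM (𝕜 := ℂ) M‖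


section AuxCoherence
set_option linter.unusedSectionVars false
variable {m n : Type*} [Fintype m]

lemma colNorm_nonneg' (M : Matrix m n ℂ) (j : n) : 0 ≤ colNorm M j := Real.sqrt_nonneg _

lemma colNorm_sq' (M : Matrix m n ℂ) (j : n) : colNorm M j ^ 2 = ∑ i, ‖M i j‖ ^ 2 :=
  Real.sq_sqrt (Finset.sum_nonneg fun _ _ => sq_nonneg _)

lemma colNorm_pos' (M : Matrix m n ℂ) (j : n) (h : ∃ i, M i j ≠ 0) : 0 < colNorm M j := by
  obtain ⟨i, hi⟩ := h
  apply Real.sqrt_pos.2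
  exact Finset.sum_pos' (fun _ _ => sq_nonneg _) ⟨i, Finset.mem_univ i, by have := norm_pos_iff.2 hi; positivity⟩

lemma gram_apply' (M : Matrix m n ℂ) (j k : n) :
    (Mᴴ * M) j k = ∑ i, (starRingEnd ℂ) (M i j) * M i k := by
  simp [Matrix.mul_apply, Matrix.conjTranspose_apply]

lemma gram_diag' (M : Matrix m n ℂ) (j : n) :
    (Mᴴ * M) j j = ((colNorm M j ^ 2 : ℝ) : ℂ) := by
  rw [gram_apply', colNorm_sq']
  push_cast
  refine Finset.sum_congr rfl fun i _ => ?_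
  rw [mul_comm, Complex.mul_conj']

lemma sum_abs_le' (M : Matrix m n ℂ) (j : n) :
    ∑ i, ‖M i j‖ ≤ Real.sqrt (Fintype.card m) * colNorm M j := by
  have h := Finset.sum_mul_sq_le_sq_mul_sq Finset.univ (fun _ : m => (1 : ℝ)) (fun i => ‖M i j‖)
  simp only [one_mul, one_pow, Finset.sum_const, Finset.card_univ, nsmul_eq_mul, mul_one] at h
  have h2 := Real.sqrt_le_sqrt h
  rwa [Real.sqrt_sq (Finset.sum_nonneg fun _ _ => norm_nonneg _),
    Real.sqrt_mul (by positivity)] at h2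

lemma gram_cs' (M : Matrix m n ℂ) (j k : n) :
    ‖(Mᴴ * M) j k‖ ≤ colNorm M j * colNorm M k := by
  rw [gram_apply']
  have h1 : ‖∑ i, (starRingEnd ℂ) (M i j) * M i k‖ ≤ ∑ i, ‖M i j‖ * ‖M i k‖ := by
    refine (norm_sum_le _ _).trans_eq ?_
    simp [norm_mul]
  refine h1.trans ?_
  have h2 := Finset.sum_mul_sq_le_sq_mul_sq Finset.univ (fun i => ‖M i j‖) (fun i => ‖M i k‖)
  have h3 := Real.sqrt_le_sqrt h2
  rwa [Real.sqrt_sq (Finset.sum_nonneg fun _ _ => mul_nonneg (norm_nonneg _) (norm_nonneg _)),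
    Real.sqrt_mul (Finset.sum_nonneg fun _ _ => sq_nonneg _)] at h3

variable [Fintype n]

lemma coherence_nonneg' (M : Matrix m n ℂ) : 0 ≤ coherence M := by
  apply Real.sSup_nonneg
  rintro r ⟨j, k, -, rfl⟩
  exact div_nonneg (norm_nonneg _) (mul_nonneg (colNorm_nonneg' M j) (colNorm_nonneg' M k))

omit [Fintype n] in
lemma coherence_elem_le_one (M : Matrix m n ℂ) :
    ∀ r ∈ {r : ℝ | ∃ j k, j ≠ k ∧ r = ‖(Mᴴ * M) j k‖ / (colNorm M j * colNorm M k)}, r ≤ 1 := by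
  rintro r ⟨j, k, -, rfl⟩
  by_cases h : colNorm M j * colNorm M k = 0
  · simp [h]
  · have hpos : 0 < colNorm M j * colNorm M k :=
      lt_of_le_of_ne (mul_nonneg (colNorm_nonneg' M j) (colNorm_nonneg' M k)) (Ne.symm h)
    exact div_le_one_of_le₀ (gram_cs' M j k) hpos.le

lemma coherence_bdd (M : Matrix m n ℂ) :
    BddAbove {r : ℝ | ∃ j k, j ≠ k ∧ r = ‖(Mᴴ * M) j k‖ / (colNorm M j * colNorm M k)} :=
  ⟨1, coherence_elem_le_one M⟩

lemma coherence_le_one' (M : Matrix m n ℂ) : coherence M ≤ 1 :=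
  Real.sSup_le (coherence_elem_le_one M) zero_le_one

lemma gram_le_coherence (M : Matrix m n ℂ) {j k : n} (hjk : j ≠ k)
    (hj : 0 < colNorm M j) (hk : 0 < colNorm M k) :
    ‖(Mᴴ * M) j k‖ ≤ coherence M * (colNorm M j * colNorm M k) := by
  have hmem : (‖(Mᴴ * M) j k‖ / (colNorm M j * colNorm M k)) ∈
      {r : ℝ | ∃ j k, j ≠ k ∧ r = ‖(Mᴴ * M) j k‖ / (colNorm M j * colNorm M k)} :=
    ⟨j, k, hjk, rfl⟩
  have hle := le_csSup (coherence_bdd M) hmem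
  rwa [div_le_iff₀ (mul_pos hj hk)] at hle


end AuxCoherence

/-- Proposition 4.2: coherence of a matrix product. -/
theorem coherence_mul_le {L N P : ℕ}
    (A : Matrix (Fin L) (Fin N) ℂ) (H : Matrix (Fin N) (Fin P) ℂ)
    (hA : ∀ j, colNorm A j = 1)
    (hH : ∀ j, ∃ i, H i j ≠ 0)
    (hAH : ∀ j, ∃ i, (A * H) i j ≠ 0)
    (hNμ : (N : ℝ) * coherence A ≠ 1) :
    coherence (A * H) ≤
      (coherence H + (N : ℝ) * coherence A) / |1 - (N : ℝ) * coherence A| := by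
  set μA := coherence A with hμA
  set μH := coherence H with hμH
  set t : ℝ := (N : ℝ) * μA with ht
  have hμA0 : 0 ≤ μA := coherence_nonneg' A
  have hμH0 : 0 ≤ μH := coherence_nonneg' H
  have ht0 : 0 ≤ t := mul_nonneg (Nat.cast_nonneg N) hμA0
  set D : Matrix (Fin N) (Fin N) ℂ := Aᴴ * A - 1 with hD
  -- entry bound on D
  have hDle : ∀ p q, ‖D p q‖ ≤ μA := by
    intro p q
    by_cases hpq : p = q
    · subst hpq
      have : D p p = 0 := by
        simp [hD, Matrix.sub_apply, gram_diag' A p, hA p]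
      simp [this, hμA0]
    · have h1 : D p q = (Aᴴ * A) p q := by
        simp [hD, Matrix.sub_apply, Matrix.one_apply_ne hpq]
      rw [h1]
      have := gram_le_coherence A hpq (by rw [hA p]; norm_num) (by rw [hA q]; norm_num)
      simpa [hA p, hA q] using this
  -- decomposition
  have hdecomp : (A * H)ᴴ * (A * H) = Hᴴ * H + Hᴴ * (D * H) := by
    rw [hD, Matrix.sub_mul, Matrix.one_mul, Matrix.mul_sub, conjTranspose_mul,
      Matrix.mul_assoc, ← Matrix.mul_assoc Aᴴ A H]
    abel
  -- error bound
  have hErr : ∀ j k, ‖(Hᴴ * (D * H)) j k‖ ≤ t * (colNorm H j * colNorm H k) := by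
    intro j k
    have h1 : ‖(Hᴴ * (D * H)) j k‖ ≤ ∑ p, ∑ q, ‖H p j‖ * (μA * ‖H q k‖) := by
      rw [Matrix.mul_apply]
      refine (norm_sum_le _ _).trans (Finset.sum_le_sum fun p _ => ?_)
      simp only [norm_mul, Matrix.conjTranspose_apply, norm_star]
      rw [← Finset.mul_sum]
      refine mul_le_mul_of_nonneg_left ?_ (norm_nonneg (H p j))
      rw [Matrix.mul_apply]
      refine (norm_sum_le _ _).trans ?_
      refine Finset.sum_le_sum fun q _ => ?_
      rw [norm_mul]
      exact mul_le_mul_of_nonneg_right (hDle p q) (norm_nonneg (H q k))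
    refine h1.trans ?_
    have h2 : ∑ p, ∑ q, ‖H p j‖ * (μA * ‖H q k‖)
        = μA * ((∑ p, ‖H p j‖) * (∑ q, ‖H q k‖)) := by
      rw [Finset.sum_mul_sum, Finset.mul_sum]
      refine Finset.sum_congr rfl fun p _ => ?_
      rw [Finset.mul_sum]
      refine Finset.sum_congr rfl fun q _ => ?_
      ring
    rw [h2]
    have hcard : (Fintype.card (Fin N) : ℝ) = (N : ℝ) := by simp
    have h3 : (∑ p, ‖H p j‖) * (∑ q, ‖H q k‖)
        ≤ (Real.sqrt N * colNorm H j) * (Real.sqrt N * colNorm H k) := by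
      refine mul_le_mul ?_ ?_ (Finset.sum_nonneg fun _ _ => norm_nonneg _)
        (mul_nonneg (Real.sqrt_nonneg _) (colNorm_nonneg' H j))
      · have := sum_abs_le' H j; rwa [hcard] at this
      · have := sum_abs_le' H k; rwa [hcard] at this
    refine (mul_le_mul_of_nonneg_left h3 hμA0).trans_eq ?_
    have hNN : Real.sqrt N * Real.sqrt N = (N : ℝ) :=
      Real.mul_self_sqrt (Nat.cast_nonneg N)
    rw [ht]; linear_combination (μA * colNorm H j * colNorm H k) * hNN
  -- diagonal lower bound
  have hdiag : ∀ j, (1 - t) * colNorm H j ^ 2 ≤ colNorm (A * H) j ^ 2 := by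
    intro j
    have he : ((A * H)ᴴ * (A * H)) j j = (Hᴴ * H) j j + (Hᴴ * (D * H)) j j := by
      rw [hdecomp]; simp [Matrix.add_apply]
    rw [gram_diag' (A * H) j, gram_diag' H j] at he
    have hE : (Hᴴ * (D * H)) j j
        = ((colNorm (A * H) j ^ 2 - colNorm H j ^ 2 : ℝ) : ℂ) := by
      push_cast at he ⊢
      linear_combination -he
    have := hErr j j
    rw [hE, Complex.norm_real] at this
    have h4 : colNorm H j ^ 2 - colNorm (A * H) j ^ 2 ≤ t * colNorm H j ^ 2 := by
      calc colNorm H j ^ 2 - colNorm (A * H) j ^ 2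
          ≤ |colNorm (A * H) j ^ 2 - colNorm H j ^ 2| := by
            rw [abs_sub_comm]; exact le_abs_self _
        _ ≤ t * (colNorm H j * colNorm H j) := this
        _ = t * colNorm H j ^ 2 := by ring
    nlinarith [colNorm_nonneg' H j]
  rcases lt_or_gt_of_ne hNμ with htlt | htgt
  · -- t < 1
    have h1t : 0 < 1 - t := by linarith
    have habs : |1 - t| = 1 - t := abs_of_pos h1t
    rw [habs]
    have hRHS0 : 0 ≤ (μH + t) / (1 - t) := div_nonneg (by linarith) h1t.le
    refine Real.sSup_le ?_ hRHS0
    rintro r ⟨j, k, hjk, rfl⟩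
    have hMj : 0 < colNorm (A * H) j := colNorm_pos' _ j (hAH j)
    have hMk : 0 < colNorm (A * H) k := colNorm_pos' _ k (hAH k)
    have hHj : 0 < colNorm H j := colNorm_pos' _ j (hH j)
    have hHk : 0 < colNorm H k := colNorm_pos' _ k (hH k)
    rw [div_le_iff₀ (mul_pos hMj hMk)]
    -- numerator bound
    have hnum : ‖((A * H)ᴴ * (A * H)) j k‖ ≤ (μH + t) * (colNorm H j * colNorm H k) := by
      have he : ((A * H)ᴴ * (A * H)) j k = (Hᴴ * H) j k + (Hᴴ * (D * H)) j k := by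
        rw [hdecomp]; simp [Matrix.add_apply]
      rw [he]
      calc ‖(Hᴴ * H) j k + (Hᴴ * (D * H)) j k‖
          ≤ ‖(Hᴴ * H) j k‖ + ‖(Hᴴ * (D * H)) j k‖ := norm_add_le _ _
        _ ≤ μH * (colNorm H j * colNorm H k) + t * (colNorm H j * colNorm H k) :=
            add_le_add (gram_le_coherence H hjk hHj hHk) (hErr j k)
        _ = (μH + t) * (colNorm H j * colNorm H k) := by ring
    -- denominator bound
    have hden : (1 - t) * (colNorm H j * colNorm H k)
        ≤ colNorm (A * H) j * colNorm (A * H) k := by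
      have hj := hdiag j
      have hk := hdiag k
      have hsj : Real.sqrt (1 - t) * colNorm H j ≤ colNorm (A * H) j := by
        have := Real.sqrt_le_sqrt hj
        rwa [Real.sqrt_mul h1t.le, Real.sqrt_sq (colNorm_nonneg' H j),
          Real.sqrt_sq (colNorm_nonneg' (A * H) j)] at this
      have hsk : Real.sqrt (1 - t) * colNorm H k ≤ colNorm (A * H) k := by
        have := Real.sqrt_le_sqrt hk
        rwa [Real.sqrt_mul h1t.le, Real.sqrt_sq (colNorm_nonneg' H k),
          Real.sqrt_sq (colNorm_nonneg' (A * H) k)] at this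
      calc (1 - t) * (colNorm H j * colNorm H k)
          = (Real.sqrt (1 - t) * colNorm H j) * (Real.sqrt (1 - t) * colNorm H k) := by
            have h5 := Real.mul_self_sqrt h1t.le
            linear_combination (-(colNorm H j * colNorm H k)) * h5
        _ ≤ colNorm (A * H) j * colNorm (A * H) k :=
            mul_le_mul hsj hsk (by positivity) hMj.le
    calc ‖((A * H)ᴴ * (A * H)) j k‖
        ≤ (μH + t) * (colNorm H j * colNorm H k) := hnum
      _ = (μH + t) / (1 - t) * ((1 - t) * (colNorm H j * colNorm H k)) := by
          field_simp
      _ ≤ (μH + t) / (1 - t) * (colNorm (A * H) j * colNorm (A * H) k) :=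
          mul_le_mul_of_nonneg_left hden hRHS0
  · -- t > 1
    have h1t : 0 < t - 1 := by linarith
    have habs : |1 - t| = t - 1 := by rw [abs_sub_comm]; exact abs_of_pos h1t
    rw [habs]
    refine (coherence_le_one' (A * H)).trans ?_
    rw [le_div_iff₀ h1t]
    linarith

end
end

section
/- Let A ∈ ℂ^{N_d×N} have unit ℓ²-norm columns and B ∈ ℂ^{N×N_s} be such that the columns of B^* have unit ℓ² norm, let Γ ∈ ℂ^{N×N}, and let V and V_n be N×N diagonal matrices, each with at most s nonzero diagonal entries, with diagonal vectors v and v_n. Set δ = ‖VΓ‖_max, γ = ‖VΓ‖₁ and γ_n = ‖V_nΓ‖₁, and suppose γ < 1 and I − VΓ is invertible. Then max_j | [ (I + V_nΓ)^* A^*A ( (I−VΓ)^{-1} − (I+VΓ) ) V B B^* ]_{jj} | ≤ (1+γ_n) (1 + (s−1)μ(A)) (1 + (s−1)μ(B^*)) · (δγ/(1−γ)) · ‖v‖_∞. -/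
open Matrix Finset Filter

noncomputable section

/-!
Write `W = diag(v) Γ`. Since `(1 - W)⁻¹ = 1 + W (1 - W)⁻¹`, the linearization error is
`E = (1 - W)⁻¹ - (1 + W) = W² (1 - W)⁻¹`. A Neumann-series argument bounds the column sums of
`(1 - W)⁻¹` by `1 / (1 - γ)`, so every entry of `E` is at most `δ γ / (1 - γ)`. The rows of `E`
and the columns of `E diag(v)` vanish off the support `S` of `v`, which has at most `s` elements.
Hence in `A^*A (E diag(v)) B B^*` only the columns of the Gram matrices indexed by `S` enter, and
their sums over `S` are at most `1 + (s - 1) μ`; the factor `(1 + V_n Γ)^*` contributes its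
column sum `1 + γ_n`.
-/

section EntrywiseBounds

variable {l m n : Type*}

lemma norm_le_linf [Fintype n] (x : n → ℂ) (i : n) : ‖x i‖ ≤ linf x :=
  le_ciSup (f := fun i => ‖x i‖) (Finite.bddAbove_range _) i

lemma norm_apply_le_maxNorm [Fintype m] [Fintype n] (M : Matrix m n ℂ) (i : m) (j : n) :
    ‖M i j‖ ≤ maxNorm M :=
  le_ciSup (f := fun p : m × n => ‖M p.1 p.2‖) (Finite.bddAbove_range _) (i, j)

lemma sum_norm_apply_le_matL1 [Fintype m] [Fintype n] (M : Matrix m n ℂ) (j : n) :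
    ∑ i, ‖M i j‖ ≤ matL1 M :=
  le_ciSup (f := fun j => ∑ i, ‖M i j‖) (Finite.bddAbove_range _) j

lemma matL1_nonneg [Fintype m] [Fintype n] (M : Matrix m n ℂ) : 0 ≤ matL1 M :=
  Real.iSup_nonneg fun _ => sum_nonneg fun _ _ => norm_nonneg _

lemma norm_mul_apply_le [Fintype m] (M : Matrix l m ℂ) (X : Matrix m n ℂ) (i : l) (j : n) :
    ‖(M * X) i j‖ ≤ ∑ t, ‖M i t‖ * ‖X t j‖ := by
  rw [mul_apply]
  exact (norm_sum_le _ _).trans_eq (by simp only [norm_mul])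

lemma norm_mul_apply_le_maxNorm_mul [Fintype l] [Fintype m] (M : Matrix l m ℂ) (X : Matrix m n ℂ)
    (i : l) (j : n) :
    ‖(M * X) i j‖ ≤ maxNorm M * ∑ t, ‖X t j‖ := by
  rw [mul_sum]
  exact (norm_mul_apply_le M X i j).trans <| sum_le_sum fun t _ =>
    mul_le_mul_of_nonneg_right (norm_apply_le_maxNorm M i t) (norm_nonneg _)

lemma sum_norm_mul_apply_le [Fintype l] [Fintype m] (M : Matrix l m ℂ) (X : Matrix m n ℂ)
    (j : n) :
    ∑ i, ‖(M * X) i j‖ ≤ matL1 M * ∑ t, ‖X t j‖ :=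
  calc ∑ i, ‖(M * X) i j‖ ≤ ∑ i, ∑ t, ‖M i t‖ * ‖X t j‖ :=
        sum_le_sum fun i _ => norm_mul_apply_le M X i j
    _ = ∑ t, (∑ i, ‖M i t‖) * ‖X t j‖ := by simp only [sum_mul]; exact sum_comm
    _ ≤ ∑ t, matL1 M * ‖X t j‖ := sum_le_sum fun t _ =>
        mul_le_mul_of_nonneg_right (sum_norm_apply_le_matL1 M t) (norm_nonneg _)
    _ = matL1 M * ∑ t, ‖X t j‖ := (mul_sum _ _ _).symm

lemma sum_norm_one_add_apply_le [Fintype n] [DecidableEq n] (M : Matrix n n ℂ) (j : n) :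
    ∑ i, ‖(1 + M) i j‖ ≤ 1 + ∑ i, ‖M i j‖ :=
  calc ∑ i, ‖(1 + M) i j‖ ≤ ∑ i, (‖(1 : Matrix n n ℂ) i j‖ + ‖M i j‖) :=
        sum_le_sum fun i _ => norm_add_le _ _
    _ = 1 + ∑ i, ‖M i j‖ := by
        simp [sum_add_distrib, one_apply, apply_ite (‖·‖)]

end EntrywiseBounds

section SecondBornRemainder

variable {n : Type*} [Fintype n] [DecidableEq n] (W : Matrix n n ℂ)

lemma inv_one_sub_eq_one_add_mul_inv (hW : IsUnit (1 - W)) :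
    (1 - W)⁻¹ = 1 + W * (1 - W)⁻¹ := by
  have h : (1 - W) * (1 - W)⁻¹ = 1 := mul_nonsing_inv _ ((isUnit_iff_isUnit_det _).mp hW)
  rw [sub_mul, one_mul] at h
  exact sub_eq_iff_eq_add.mp h

lemma inv_one_sub_sub_one_add (hW : IsUnit (1 - W)) :
    (1 - W)⁻¹ - (1 + W) = W * W * (1 - W)⁻¹ := by
  conv_lhs => rw [inv_one_sub_eq_one_add_mul_inv W hW, inv_one_sub_eq_one_add_mul_inv W hW]
  noncomm_ring

lemma sum_norm_inv_one_sub_apply_le (hW : IsUnit (1 - W)) (h1 : matL1 W < 1) (j : n) :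
    ∑ i, ‖(1 - W)⁻¹ i j‖ ≤ 1 / (1 - matL1 W) := by
  set X := (1 - W)⁻¹
  have hX : ∑ i, ‖X i j‖ ≤ 1 + matL1 W * ∑ i, ‖X i j‖ :=
    calc ∑ i, ‖X i j‖ = ∑ i, ‖(1 + W * X) i j‖ := by
          rw [← inv_one_sub_eq_one_add_mul_inv W hW]
      _ ≤ 1 + ∑ i, ‖(W * X) i j‖ := sum_norm_one_add_apply_le _ j
      _ ≤ 1 + matL1 W * ∑ i, ‖X i j‖ := by gcongr; exact sum_norm_mul_apply_le W X j
  rw [le_div_iff₀ (by linarith)]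
  linarith

lemma norm_inv_one_sub_sub_one_add_apply_le (hW : IsUnit (1 - W)) (h1 : matL1 W < 1) (i j : n) :
    ‖((1 - W)⁻¹ - (1 + W)) i j‖ ≤ maxNorm W * matL1 W / (1 - matL1 W) := by
  have hmaxNorm : 0 ≤ maxNorm W := (norm_nonneg _).trans (norm_apply_le_maxNorm W i i)
  rw [inv_one_sub_sub_one_add W hW, mul_assoc, mul_div_assoc, ← mul_one_div (matL1 W)]
  refine (norm_mul_apply_le_maxNorm_mul _ _ i j).trans (mul_le_mul_of_nonneg_left ?_ hmaxNorm)
  exact (sum_norm_mul_apply_le _ _ j).trans <| mul_le_mul_of_nonneg_left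
    (sum_norm_inv_one_sub_apply_le W hW h1 j) (matL1_nonneg W)

variable (v : n → ℂ) (Γ : Matrix n n ℂ)

lemma inv_one_sub_sub_one_add_mul_diagonal_apply (hW : IsUnit (1 - diagonal v * Γ)) (q r : n) :
    (((1 - diagonal v * Γ)⁻¹ - (1 + diagonal v * Γ)) * diagonal v) q r =
      v q * (Γ * (diagonal v * Γ) * (1 - diagonal v * Γ)⁻¹) q r * v r := by
  rw [inv_one_sub_sub_one_add _ hW, mul_diagonal]
  simp only [Matrix.mul_assoc, diagonal_mul]

lemma norm_inv_one_sub_sub_one_add_mul_diagonal_apply_le (hW : IsUnit (1 - diagonal v * Γ))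
    (h1 : matL1 (diagonal v * Γ) < 1) (q r : n) :
    ‖(((1 - diagonal v * Γ)⁻¹ - (1 + diagonal v * Γ)) * diagonal v) q r‖ ≤
      maxNorm (diagonal v * Γ) * matL1 (diagonal v * Γ) / (1 - matL1 (diagonal v * Γ)) *
        linf v := by
  have hmaxNorm := (norm_nonneg _).trans (norm_apply_le_maxNorm (diagonal v * Γ) q q)
  have hmatL1 := matL1_nonneg (diagonal v * Γ)
  have : 0 < 1 - matL1 (diagonal v * Γ) := by linarith
  rw [mul_diagonal, norm_mul]
  exact mul_le_mul (norm_inv_one_sub_sub_one_add_apply_le _ hW h1 q r) (norm_le_linf v r)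
    (norm_nonneg _) (by positivity)

end SecondBornRemainder

section SupportedSums

variable {ι l m n o : Type*} [Fintype ι] [Fintype m] [Fintype n]

lemma norm_sum_mul_le_of_support (x y : ι → ℂ) (S : Finset ι) (c : ℝ)
    (hy : ∀ i, ‖y i‖ ≤ c) (hS : ∀ i ∉ S, y i = 0) :
    ‖∑ i, x i * y i‖ ≤ (∑ i ∈ S, ‖x i‖) * c := by
  rw [← sum_subset (subset_univ S) fun i _ hi => by rw [hS i hi, mul_zero], sum_mul]
  exact (norm_sum_le _ _).trans <| sum_le_sum fun i _ => by
    rw [norm_mul]; exact mul_le_mul_of_nonneg_left (hy i) (norm_nonneg _)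

lemma norm_conjTranspose_mul_apply_le (P : Matrix m l ℂ) (M : Matrix m o ℂ) (i : l) (j : o)
    {a K : ℝ} (hP : ∑ p, ‖P p i‖ ≤ a) (hM : ∀ p, ‖M p j‖ ≤ K) (hK : 0 ≤ K) :
    ‖(Pᴴ * M) i j‖ ≤ a * K := by
  have h := norm_sum_mul_le_of_support (fun p => star (P p i)) (M · j) univ K hM (by simp)
  simp only [norm_star] at h
  rw [mul_apply]
  exact h.trans (mul_le_mul_of_nonneg_right hP hK)

lemma norm_mul_mul_apply_le_of_support (G : Matrix l m ℂ) (F : Matrix m n ℂ) (H : Matrix n o ℂ)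
    (S : Finset m) (T : Finset n) {a b c : ℝ} (p : l) (j : o) (hG : ∑ q ∈ S, ‖G p q‖ ≤ a)
    (hH : ∑ r ∈ T, ‖H r j‖ ≤ b) (hF : ∀ q r, ‖F q r‖ ≤ c) (hc : 0 ≤ c)
    (hsupp : ∀ q r, F q r ≠ 0 → q ∈ S ∧ r ∈ T) :
    ‖(G * F * H) p j‖ ≤ a * c * b := by
  have hGF : ∀ r, ‖(G * F) p r‖ ≤ a * c := fun r =>
    (norm_sum_mul_le_of_support _ (F · r) S c (hF · r) fun q hq => by
      by_contra h; exact hq (hsupp q r h).1).trans (mul_le_mul_of_nonneg_right hG hc)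
  have hGFsupp : ∀ r ∉ T, (G * F) p r = 0 := fun r hr => by
    rw [mul_apply]
    refine sum_eq_zero fun q _ => ?_
    by_cases h : F q r = 0
    · rw [h, mul_zero]
    · exact absurd (hsupp q r h).2 hr
  have hac : 0 ≤ a * c := mul_nonneg ((sum_nonneg fun _ _ => norm_nonneg _).trans hG) hc
  have h := norm_sum_mul_le_of_support (H · j) _ T _ hGF hGFsupp
  simp only [mul_comm (H _ j)] at h
  rw [mul_apply, mul_comm _ b]
  exact h.trans (mul_le_mul_of_nonneg_right hH hac)

end SupportedSums

section Coherence

variable {m n : Type*} [Fintype m] (A : Matrix m n ℂ)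

lemma norm_gram_apply_le_one (hA : ∀ j, colNorm A j = 1) (j k : n) : ‖(Aᴴ * A) j k‖ ≤ 1 := by
  have hsq : ∀ j, ∑ i, ‖A i j‖ ^ 2 = 1 := fun j => Real.sqrt_eq_one.mp (hA j)
  calc ‖(Aᴴ * A) j k‖ ≤ ∑ i, ‖A i j‖ * ‖A i k‖ := by
        simpa only [conjTranspose_apply, norm_star] using norm_mul_apply_le Aᴴ A j k
    _ ≤ √(∑ i, ‖A i j‖ ^ 2) * √(∑ i, ‖A i k‖ ^ 2) := Real.sum_mul_le_sqrt_mul_sqrt _ _ _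
    _ = 1 := by rw [hsq, hsq, Real.sqrt_one, mul_one]

variable [Fintype n]

lemma norm_gram_apply_le_coherence (hA : ∀ j, colNorm A j = 1) {j k : n} (hjk : j ≠ k) :
    ‖(Aᴴ * A) j k‖ ≤ coherence A := by
  have hbdd : BddAbove
      {r : ℝ | ∃ j k, j ≠ k ∧ r = ‖(Aᴴ * A) j k‖ / (colNorm A j * colNorm A k)} :=
    ⟨1, by rintro r ⟨j, k, -, rfl⟩; simpa [hA] using norm_gram_apply_le_one A hA j k⟩
  have h := le_csSup hbdd ⟨j, k, hjk, rfl⟩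
  rwa [hA, hA, mul_one, div_one] at h

lemma coherence_nonneg : 0 ≤ coherence A :=
  Real.sSup_nonneg <| by
    rintro r ⟨j, k, -, rfl⟩
    exact div_nonneg (norm_nonneg _) (mul_nonneg (Real.sqrt_nonneg _) (Real.sqrt_nonneg _))

lemma coherence_le_one (hA : ∀ j, colNorm A j = 1) : coherence A ≤ 1 :=
  Real.sSup_le (by rintro r ⟨j, k, -, rfl⟩; simpa [hA] using norm_gram_apply_le_one A hA j k)
    zero_le_one

lemma sum_norm_gram_apply_le [DecidableEq n] (hA : ∀ j, colNorm A j = 1) {S : Finset n} {s : ℕ}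
    (hS : #S ≤ s) (p : n) :
    ∑ q ∈ S, ‖(Aᴴ * A) p q‖ ≤ 1 + ((s : ℝ) - 1) * coherence A := by
  set μ := coherence A
  have hμ : μ ≤ 1 := coherence_le_one A hA
  have hterm : ∀ q, ‖(Aᴴ * A) p q‖ ≤ μ + if p = q then 1 - μ else 0 := fun q => by
    split_ifs with h
    · rw [add_sub_cancel]; exact norm_gram_apply_le_one A hA p q
    · rw [add_zero]; exact norm_gram_apply_le_coherence A hA h
  have hS' : (#S : ℝ) ≤ s := by exact_mod_cast hS
  calc ∑ q ∈ S, ‖(Aᴴ * A) p q‖ ≤ ∑ q ∈ S, (μ + if p = q then 1 - μ else 0) :=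
        sum_le_sum fun q _ => hterm q
    _ = #S * μ + if p ∈ S then 1 - μ else 0 := by simp [sum_add_distrib]
    _ ≤ s * μ + (1 - μ) := by
        gcongr
        · exact coherence_nonneg A
        · split_ifs <;> linarith
    _ = 1 + ((s : ℝ) - 1) * μ := by ring

lemma sum_norm_mul_conjTranspose_apply_le [DecidableEq m] (hA : ∀ j, colNorm Aᴴ j = 1)
    {S : Finset m} {s : ℕ} (hS : #S ≤ s) (p : m) :
    ∑ q ∈ S, ‖(A * Aᴴ) q p‖ ≤ 1 + ((s : ℝ) - 1) * coherence Aᴴ := by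
  have h := sum_norm_gram_apply_le Aᴴ hA hS p
  rw [conjTranspose_conjTranspose] at h
  refine le_trans (le_of_eq (sum_congr rfl fun q _ => ?_)) h
  rw [← (isHermitian_mul_conjTranspose_self A).apply q p, norm_star]

end Coherence

lemma card_support_le_of_sparse {n : Type*} [Fintype n] {s : ℕ} {v : n → ℂ} (hv : sparse s v) :
    #{i | v i ≠ 0} ≤ s := by
  classical
  have hsupp : {i | v i ≠ 0} = ((univ.filter fun i => v i ≠ 0 : Finset n) : Set n) := by
    ext; simp
  rwa [sparse, hsupp, Set.ncard_coe_finset] at hv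

theorem secondBorn_linearization_error_bound_general {Nd Ns N : ℕ} (s : ℕ)
    (A : Matrix (Fin Nd) (Fin N) ℂ) (hA : ∀ j, colNorm A j = 1)
    (B : Matrix (Fin N) (Fin Ns) ℂ) (hB : ∀ j, colNorm Bᴴ j = 1)
    (Γ : Matrix (Fin N) (Fin N) ℂ)
    (v vn : Fin N → ℂ) (hv : sparse s v)
    (δ γ γn : ℝ)
    (hδ : δ = maxNorm (Matrix.diagonal v * Γ))
    (hγ : γ = matL1 (Matrix.diagonal v * Γ)) (hγ1 : γ < 1)
    (hγn : γn = matL1 (Matrix.diagonal vn * Γ))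
    (hinv : IsUnit (1 - Matrix.diagonal v * Γ)) :
    (⨆ j, ‖(((1 + Matrix.diagonal vn * Γ)ᴴ * Aᴴ * A *
        ((1 - Matrix.diagonal v * Γ)⁻¹ - (1 + Matrix.diagonal v * Γ)) *
        Matrix.diagonal v * B * Bᴴ : Matrix (Fin N) (Fin N) ℂ)) j j‖) ≤
      (1 + γn) * (1 + ((s : ℝ) - 1) * coherence A) *
        (1 + ((s : ℝ) - 1) * coherence Bᴴ) * (δ * γ / (1 - γ)) * linf v := by
  rcases isEmpty_or_nonempty (Fin N) with hN | hN
  · simp [linf] -- over an empty index type both suprema are `0`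
  set S : Finset (Fin N) := {i | v i ≠ 0}
  set F := ((1 - diagonal v * Γ)⁻¹ - (1 + diagonal v * Γ)) * diagonal v with hFdef
  have hF : ∀ q r, ‖F q r‖ ≤ δ * γ / (1 - γ) * linf v := by
    subst hδ hγ
    exact norm_inv_one_sub_sub_one_add_mul_diagonal_apply_le v Γ hinv hγ1
  have hFsupp : ∀ q r, F q r ≠ 0 → q ∈ S ∧ r ∈ S := fun q r h => by
    rw [hFdef, inv_one_sub_sub_one_add_mul_diagonal_apply v Γ hinv] at h
    simpa [S] using ⟨left_ne_zero_of_mul (left_ne_zero_of_mul h), right_ne_zero_of_mul h⟩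
  have hc : 0 ≤ δ * γ / (1 - γ) * linf v := (norm_nonneg _).trans (hF hN.some hN.some)
  have hmid : ∀ p j, ‖(Aᴴ * A * F * (B * Bᴴ)) p j‖ ≤
      (1 + ((s : ℝ) - 1) * coherence A) * (δ * γ / (1 - γ) * linf v) *
        (1 + ((s : ℝ) - 1) * coherence Bᴴ) := fun p j =>
    norm_mul_mul_apply_le_of_support _ F _ _ _ p j
      (sum_norm_gram_apply_le A hA (card_support_le_of_sparse hv) p)
      (sum_norm_mul_conjTranspose_apply_le B hB (card_support_le_of_sparse hv) j) hF hc hFsupp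
  refine ciSup_le fun j => ?_
  rw [show (1 + diagonal vn * Γ)ᴴ * Aᴴ * A * ((1 - diagonal v * Γ)⁻¹ - (1 + diagonal v * Γ)) *
      diagonal v * B * Bᴴ = (1 + diagonal vn * Γ)ᴴ * (Aᴴ * A * F * (B * Bᴴ)) by
    simp only [F, Matrix.mul_assoc]]
  have hP : ∑ p, ‖(1 + diagonal vn * Γ) p j‖ ≤ 1 + γn :=
    (sum_norm_one_add_apply_le _ j).trans (hγn ▸ add_le_add_right (sum_norm_apply_le_matL1 _ j) 1)
  calc _ ≤ (1 + γn) * _ := norm_conjTranspose_mul_apply_le _ _ j j hP (hmid · j)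
        ((norm_nonneg _).trans (hmid j j))
    _ = _ := by ring

/-- Section 4.2: bound on the linearization error for the second Born approximation. -/
theorem secondBorn_linearization_error_bound {Nd Ns N : ℕ} (s : ℕ)
    (A : Matrix (Fin Nd) (Fin N) ℂ) (hA : ∀ j, colNorm A j = 1)
    (B : Matrix (Fin N) (Fin Ns) ℂ) (hB : ∀ j, colNorm Bᴴ j = 1)
    (Γ : Matrix (Fin N) (Fin N) ℂ)
    (v vn : Fin N → ℂ) (hv : sparse s v) (hvn : sparse s vn)
    (δ γ γn : ℝ)
    (hδ : δ = maxNorm (Matrix.diagonal v * Γ))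
    (hγ : γ = matL1 (Matrix.diagonal v * Γ)) (hγ1 : γ < 1)
    (hγn : γn = matL1 (Matrix.diagonal vn * Γ))
    (hinv : IsUnit (1 - Matrix.diagonal v * Γ)) :
    (⨆ j, ‖(((1 + Matrix.diagonal vn * Γ)ᴴ * Aᴴ * A *
        ((1 - Matrix.diagonal v * Γ)⁻¹ - (1 + Matrix.diagonal v * Γ)) *
        Matrix.diagonal v * B * Bᴴ : Matrix (Fin N) (Fin N) ℂ)) j j‖) ≤
      (1 + γn) * (1 + ((s : ℝ) - 1) * coherence A) *
        (1 + ((s : ℝ) - 1) * coherence Bᴴ) * (δ * γ / (1 - γ)) * linf v :=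
  secondBorn_linearization_error_bound_general s A hA B hB Γ v vn hv δ γ γn hδ hγ hγ1 hγn hinv
end
end
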